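/- Let Λ be a ring with a direct sum decomposition Λ = P ⊕ Q as right Λ-modules, and let f : B → P be a right minimal right (add Q)-approximation of P (so B ∈ add Q). Assume that every endomorphism of P that is not an automorphism factors through f, and that every endomorphism u of P with u ∘ f = 0 is zero. Set X := Λ[0] ⊕ P* in K(Mod Λ). Then: (i) the sequence Hom_{K(Mod Λ)}(P[0], X) → Hom_{K(Mod Λ)}(B[0], X) → Hom_{K(Mod Λ)}(P*, X), whose maps are precomposition with the chain map B[0] → P[0] induced by f and precomposition with π respectively, is exact at the middle term; (ii) every morphism φ : P* → X in K(Mod Λ) whose component P* → P* is not an isomorphism factors through π : P* → B[0], i.e. lies in the image of the second map. (This is the paper's description of Hom(P_i*, Λ ⊕ P_i*): the image of precomposition with the approximation map equals the radical, with simple cokernel.) -/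

import Mathlib

/-!
Everything in sight is a two-term complex, so a chain map between two of them is a commutative
square and a homotopy between two chain maps is a single map `s : P ⟶ B'` from the degree-1
term of the source to the degree-0 term of the target. Maps into `X = Λ[0] ⊕ P*` are handled one
summand at a time.

(i) `π ≫ f[0]` is null-homotopic via `𝟙 P`. Conversely, a null-homotopy `s` of `π ≫ g` satisfies
`g = f ≫ s` in degree 0 and `s ≫ d = 0` in degree 1, so `s` itself is the required map
`P[0] ⟶ X`.

(ii) A map `P* ⟶ Y` factors through `π` up to homotopy once its degree-1 component has the form
`δ ≫ d_Y`, because the homotopy `δ` removes that component. For `Y = Λ[0]` this holds trivially.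
For `Y = P*`, if the degree-1 component `c` were invertible, then right minimality, together with
a lift of `f ≫ c⁻¹` through `f`, would make the degree-0 component invertible too, and with it
the whole map. So `c` is not invertible, and by hypothesis it factors through `f`.
-/

open CategoryTheory CategoryTheory.Limits

variable {Λ : Type} [Ring Λ]

/-- The category of right `Λ`-modules, as left modules over `Λᵐᵒᵖ`. -/
abbrev RMod (Λ : Type) [Ring Λ] := ModuleCat Λᵐᵒᵖ

/-- `Λ` as a right module over itself. -/
abbrev regR (Λ : Type) [Ring Λ] : RMod Λ := ModuleCat.of Λᵐᵒᵖ Λ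

/-- The graded pieces of a two-term complex concentrated in degrees 0 and 1. -/
def tX (B P : RMod Λ) : ℤ → RMod Λ
  | 0 => B
  | 1 => P
  | _ => ModuleCat.of Λᵐᵒᵖ PUnit

lemma tX0 (B P : RMod Λ) : tX B P 0 = B := rfl
lemma tX1 (B P : RMod Λ) : tX B P 1 = P := rfl

/-- The two-term cochain complex `P*` with `B` in degree 0, `P` in degree 1,
differential `f`, and zeros elsewhere. -/
def twoTerm {B P : RMod Λ} (f : B ⟶ P) : CochainComplex (RMod Λ) ℤ where
  X := tX B P
  d i j := if h : i = 0 ∧ j = 1 then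
      (eqToHom (by rw [h.1, tX0]) : tX B P i ⟶ B) ≫ f ≫
        (eqToHom (by rw [h.2, tX1]) : P ⟶ tX B P j)
    else 0
  shape i j hij := by
    try dsimp only
    rw [dif_neg]
    rintro ⟨rfl, rfl⟩
    exact hij rfl
  d_comp_d' i j k _ _ := by
    try dsimp only
    by_cases h : i = 0 ∧ j = 1
    · obtain ⟨rfl, rfl⟩ := h
      rw [dif_neg (by rintro ⟨h1, -⟩; exact one_ne_zero h1 : ¬((1:ℤ) = 0 ∧ k = 1)), comp_zero]
    · rw [dif_neg h, zero_comp]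

/-- The complex `M[0]`, with `M` concentrated in degree 0. -/
def sgl (M : RMod Λ) : CochainComplex (RMod Λ) ℤ := twoTerm (0 : M ⟶ ModuleCat.of Λᵐᵒᵖ PUnit)

/-- The homotopy category `K(Mod Λ)` of cochain complexes of right `Λ`-modules. -/
abbrev KMod (Λ : Type) [Ring Λ] := HomotopyCategory (RMod Λ) (ComplexShape.up ℤ)

/-- The quotient functor from complexes to the homotopy category. -/
abbrev Kq : CochainComplex (RMod Λ) ℤ ⥤ KMod Λ := HomotopyCategory.quotient _ _

/-- The chain map `π : P* ⟶ B[0]` given by the identity of `B` in degree 0. -/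
def projB {B P : RMod Λ} (f : B ⟶ P) : twoTerm f ⟶ sgl B where
  f i := if h : i = 0 then eqToHom (by rw [h]; rfl) else 0
  comm' i j hij := by
    try dsimp only
    by_cases h : i = 0
    · subst h
      obtain rfl : j = 1 := by simpa using hij.symm
      simp [twoTerm, sgl]
      all_goals first | rfl | exact comp_zero.symm | exact zero_comp.symm | (erw [comp_zero]) | (erw [zero_comp])
    · rw [dif_neg h, zero_comp]
      have hn : ¬(i = 0 ∧ j = 1) := fun hc => h hc.1
      simp [twoTerm, dif_neg hn]
      all_goals first | rfl | exact comp_zero.symm | exact zero_comp.symm | (erw [comp_zero]) | (erw [zero_comp])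

/-- The chain map `B[0] ⟶ P[0]` induced by `f : B ⟶ P`. -/
def sglMap {B P : RMod Λ} (f : B ⟶ P) : sgl B ⟶ sgl P where
  f i := if h : i = 0 then eqToHom (by rw [h]; rfl) ≫ f ≫ eqToHom (by rw [h]; rfl) else 0
  comm' i j hij := by
    try dsimp only
    by_cases h : i = 0
    · subst h
      obtain rfl : j = 1 := by simpa using hij.symm
      simp [sgl, twoTerm]
      all_goals first | rfl | exact comp_zero.symm | exact zero_comp.symm | (erw [comp_zero]) | (erw [zero_comp])
    · rw [dif_neg h, zero_comp]
      have hn : ¬(i = 0 ∧ j = 1) := fun hc => h hc.1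
      simp [sgl, twoTerm, dif_neg hn]
      all_goals first | rfl | exact comp_zero.symm | exact zero_comp.symm | (erw [comp_zero]) | (erw [zero_comp])

/-- `M` is in `add X`: it is a direct summand of a finite direct sum of copies of `X`. -/
def memAdd (X M : RMod Λ) : Prop :=
  ∃ (t : ℕ) (s : M ⟶ ⨁ (fun _ : Fin t => X)) (r : (⨁ (fun _ : Fin t => X)) ⟶ M),
    s ≫ r = 𝟙 M

/-- `f : B ⟶ P` is a right `add X`-approximation of `P`. -/
def IsRightApprox (X : RMod Λ) {B P : RMod Λ} (f : B ⟶ P) : Prop :=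
  memAdd X B ∧ ∀ B' : RMod Λ, memAdd X B' → ∀ g : B' ⟶ P, ∃ h : B' ⟶ B, h ≫ f = g

/-- `f : B ⟶ P` is right minimal. -/
def RightMinimal {B P : RMod Λ} (f : B ⟶ P) : Prop :=
  ∀ h : B ⟶ B, h ≫ f = f → IsIso h


theorem CategoryTheory.isIso_of_isIso_comp_of_isIso_comp {C : Type*} [Category C] {X Y : C}
    {u : X ⟶ Y} {v : Y ⟶ X} (huv : IsIso (u ≫ v)) (hvu : IsIso (v ≫ u)) : IsIso u := by
  have : IsSplitMono u := .mk' ⟨v ≫ inv (u ≫ v), by rw [← Category.assoc, IsIso.hom_inv_id]⟩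
  have : IsSplitEpi u := .mk' ⟨inv (v ≫ u) ≫ v, by rw [Category.assoc, IsIso.inv_hom_id]⟩
  exact isIso_of_mono_of_isSplitEpi u

theorem CategoryTheory.Functor.exists_comp_eq_of_biprod {C D : Type*} [Category C]
    [Preadditive C] [Category D] [Preadditive D] (F : C ⥤ D) [F.Additive] {Y₁ Y₂ : C}
    [HasBinaryBiproduct Y₁ Y₂] {A A' : D} (u : A ⟶ A') (g : A ⟶ F.obj (Y₁ ⊞ Y₂))
    (h₁ : ∃ h, u ≫ h = g ≫ F.map biprod.fst) (h₂ : ∃ h, u ≫ h = g ≫ F.map biprod.snd) :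
    ∃ h, u ≫ h = g := by
  obtain ⟨k₁, hk₁⟩ := h₁
  obtain ⟨k₂, hk₂⟩ := h₂
  refine ⟨k₁ ≫ F.map biprod.inl + k₂ ≫ F.map biprod.inr, ?_⟩
  rw [Preadditive.comp_add, ← Category.assoc, ← Category.assoc, hk₁, hk₂, Category.assoc,
    Category.assoc, ← Preadditive.comp_add, ← F.map_comp, ← F.map_comp, ← F.map_add,
    biprod.total, F.map_id, Category.comp_id]

theorem RightMinimal.isIso_of_comp_eq_comp {B P : RMod Λ} {f : B ⟶ P} (hmin : RightMinimal f)
    (hlift : ∀ g : B ⟶ P, ∃ h, h ≫ f = g) {a : B ⟶ B} {c : P ⟶ P} [IsIso c]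
    (w : a ≫ f = f ≫ c) : IsIso a := by
  obtain ⟨b, hb⟩ := hlift (f ≫ inv c)
  refine isIso_of_isIso_comp_of_isIso_comp (v := b) (hmin _ ?_) (hmin _ ?_)
  · rw [Category.assoc, hb, ← Category.assoc, w, Category.assoc, IsIso.hom_inv_id,
      Category.comp_id]
  · rw [Category.assoc, w, ← Category.assoc, hb, Category.assoc, IsIso.inv_hom_id,
      Category.comp_id]

lemma isZero_punit : IsZero (ModuleCat.of Λᵐᵒᵖ PUnit) :=
  ModuleCat.isZero_of_subsingleton _

namespace TwoTerm

variable {B P B' P' : RMod Λ} {f : B ⟶ P} {f' : B' ⟶ P'}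

/- The components of `φ` in degrees 0 and 1, typed by `B`, `P` rather than by `(twoTerm f).X i`:
the two agree only after unfolding `tX`, which `+`, `-` and `rw` do not see through. -/
def deg0 (φ : twoTerm f ⟶ twoTerm f') : B ⟶ B' := φ.f 0

def deg1 (φ : twoTerm f ⟶ twoTerm f') : P ⟶ P' := φ.f 1

lemma isZero_X (f : B ⟶ P) {i : ℤ} (h₀ : i ≠ 0) (h₁ : i ≠ 1) : IsZero ((twoTerm f).X i) := by
  change IsZero (tX B P i)
  unfold tX
  split
  · exact absurd rfl h₀
  · exact absurd rfl h₁
  · exact isZero_punit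

lemma d_eq_zero (f : B ⟶ P) {i j : ℤ} (h : ¬(i = 0 ∧ j = 1)) : (twoTerm f).d i j = 0 :=
  dif_neg h

@[simp] lemma deg0_zero : deg0 (0 : twoTerm f ⟶ twoTerm f') = 0 := rfl

@[simp] lemma deg1_zero : deg1 (0 : twoTerm f ⟶ twoTerm f') = 0 := rfl

lemma hom_ext {φ ψ : twoTerm f ⟶ twoTerm f'} (h₀ : deg0 φ = deg0 ψ) (h₁ : deg1 φ = deg1 ψ) :
    φ = ψ := by
  ext i : 1
  by_cases hi₀ : i = 0
  · subst hi₀; exact h₀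
  by_cases hi₁ : i = 1
  · subst hi₁; exact h₁
  exact (isZero_X f' hi₀ hi₁).eq_of_tgt _ _

lemma deg0_comp_eq_comp_deg1 (φ : twoTerm f ⟶ twoTerm f') : deg0 φ ≫ f' = f ≫ deg1 φ :=
  φ.comm 0 1

lemma isIso_of_isIso_deg (φ : twoTerm f ⟶ twoTerm f') [h₀ : IsIso (deg0 φ)]
    [h₁ : IsIso (deg1 φ)] : IsIso φ := by
  have (i : ℤ) : IsIso (φ.f i) := by
    by_cases hi₀ : i = 0
    · subst hi₀; exact h₀
    by_cases hi₁ : i = 1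
    · subst hi₁; exact h₁
    exact (isZero_X f hi₀ hi₁).isIso (isZero_X f' hi₀ hi₁) _
  exact HomologicalComplex.Hom.isIso_of_components φ

def homMk (a : B ⟶ B') (c : P ⟶ P') (w : a ≫ f' = f ≫ c) : twoTerm f ⟶ twoTerm f' where
  f i := if h₀ : i = 0 then eqToHom (by rw [h₀]; rfl) ≫ a ≫ eqToHom (by rw [h₀]; rfl)
    else if h₁ : i = 1 then eqToHom (by rw [h₁]; rfl) ≫ c ≫ eqToHom (by rw [h₁]; rfl)
    else 0
  comm' i j hij := by
    obtain rfl : j = i + 1 := hij.symm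
    by_cases h₀ : i = 0
    · subst h₀; exact w
    by_cases h₁ : i = 1
    · subst h₁; simp [d_eq_zero]
    · simp only [h₀, h₁, dite_false, zero_comp]
      rw [d_eq_zero f fun h => h₀ h.1, zero_comp]

lemma dNext_add_prevD_zero (h : ∀ i j, (twoTerm f).X i ⟶ (twoTerm f').X j) :
    dNext 0 h + prevD 0 h = (twoTerm f).d 0 1 ≫ h 1 0 := by
  rw [dNext_eq _ (show (ComplexShape.up ℤ).Rel 0 1 by simp),
    prevD_eq _ (show (ComplexShape.up ℤ).Rel (-1) 0 by simp), d_eq_zero f' (by simp),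
    comp_zero, add_zero]

lemma dNext_add_prevD_one (h : ∀ i j, (twoTerm f).X i ⟶ (twoTerm f').X j) :
    dNext 1 h + prevD 1 h = h 1 0 ≫ (twoTerm f').d 0 1 := by
  rw [dNext_eq _ (show (ComplexShape.up ℤ).Rel 1 2 by simp),
    prevD_eq _ (show (ComplexShape.up ℤ).Rel 0 1 by simp), d_eq_zero f (by simp),
    zero_comp, zero_add]

def homotopyMk (φ ψ : twoTerm f ⟶ twoTerm f') (s : P ⟶ B')
    (h₀ : deg0 φ - deg0 ψ = f ≫ s) (h₁ : deg1 φ - deg1 ψ = s ≫ f') : Homotopy φ ψ where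
  hom i j := if h : i = 1 ∧ j = 0 then
      eqToHom (by rw [h.1]; rfl) ≫ s ≫ eqToHom (by rw [h.2]; rfl) else 0
  zero i j hij := dif_neg fun h => hij (by simp [h.1, h.2])
  comm i := by
    by_cases hi₀ : i = 0
    · subst hi₀
      rw [dNext_add_prevD_zero, ← sub_eq_iff_eq_add]
      exact h₀
    by_cases hi₁ : i = 1
    · subst hi₁
      rw [dNext_add_prevD_one, ← sub_eq_iff_eq_add]
      exact h₁
    exact (isZero_X f' hi₀ hi₁).eq_of_tgt _ _

lemma quotient_map_eq_iff (φ ψ : twoTerm f ⟶ twoTerm f') :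
    Kq.map φ = Kq.map ψ ↔
      ∃ s : P ⟶ B', deg0 φ - deg0 ψ = f ≫ s ∧ deg1 φ - deg1 ψ = s ≫ f' := by
  refine ⟨fun h => ?_, fun ⟨s, h₀, h₁⟩ =>
    HomotopyCategory.eq_of_homotopy _ _ (homotopyMk φ ψ s h₀ h₁)⟩
  have H := HomotopyCategory.homotopyOfEq φ ψ h
  refine ⟨H.hom 1 0, ?_, ?_⟩
  · have h₀ := H.comm 0
    rw [dNext_add_prevD_zero, ← sub_eq_iff_eq_add] at h₀
    exact h₀
  · have h₁ := H.comm 1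
    rw [dNext_add_prevD_one, ← sub_eq_iff_eq_add] at h₁
    exact h₁

end TwoTerm

open TwoTerm

section Projection

variable {B P B' P' : RMod Λ} {f : B ⟶ P} {f' : B' ⟶ P'}

def sglHomMk {M : RMod Λ} (a : M ⟶ B') (w : a ≫ f' = 0) : sgl M ⟶ twoTerm f' :=
  homMk a 0 (by rw [w, comp_zero])

@[simp] lemma deg0_sglHomMk {M : RMod Λ} (a : M ⟶ B') (w : a ≫ f' = 0) :
    deg0 (sglHomMk a w) = a := rfl

@[simp] lemma deg0_projB_comp (G : sgl B ⟶ twoTerm f') : deg0 (projB f ≫ G) = deg0 G :=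
  Category.id_comp _

@[simp] lemma deg1_projB_comp (G : sgl B ⟶ twoTerm f') : deg1 (projB f ≫ G) = 0 :=
  zero_comp

@[simp] lemma deg0_sglMap_comp (H : sgl P ⟶ twoTerm f') :
    deg0 (sglMap f ≫ H) = f ≫ deg0 H :=
  (Category.assoc _ _ _).trans (Category.id_comp _)

lemma quotient_map_projB_comp_sglMap (f : B ⟶ P) :
    Kq.map (projB f) ≫ Kq.map (sglMap f) = 0 := by
  rw [← Functor.map_comp, ← Functor.map_zero Kq]
  exact (quotient_map_eq_iff _ _).2
    ⟨𝟙 P, (sub_zero f).trans (Category.comp_id f).symm, isZero_punit.eq_of_tgt _ _⟩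

lemma exists_sglMap_comp_eq_of_projB_comp_eq_zero (g : Kq.obj (sgl B) ⟶ Kq.obj (twoTerm f'))
    (hg : Kq.map (projB f) ≫ g = 0) : ∃ h, Kq.map (sglMap f) ≫ h = g := by
  obtain ⟨G, rfl⟩ := Kq.map_surjective g
  rw [← Functor.map_comp, ← Functor.map_zero Kq] at hg
  obtain ⟨s, hs₀, hs₁⟩ := (quotient_map_eq_iff _ _).1 hg
  simp only [deg0_projB_comp, deg0_zero, sub_zero] at hs₀
  simp only [deg1_projB_comp, deg1_zero, sub_zero] at hs₁
  refine ⟨Kq.map (sglHomMk s hs₁.symm), ?_⟩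
  rw [← Functor.map_comp]
  exact congrArg Kq.map
    (hom_ext ((deg0_sglMap_comp _).trans hs₀.symm) (isZero_punit.eq_of_src _ _))

lemma exists_projB_comp_eq_of_deg1_eq (Φ : twoTerm f ⟶ twoTerm f') (δ : P ⟶ B')
    (hδ : δ ≫ f' = deg1 Φ) : ∃ ψ, Kq.map (projB f) ≫ ψ = Kq.map Φ := by
  refine ⟨Kq.map (sglHomMk (deg0 Φ - f ≫ δ)
    (by rw [Preadditive.sub_comp, deg0_comp_eq_comp_deg1, Category.assoc, hδ, sub_self])), ?_⟩
  rw [← Functor.map_comp]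
  refine (quotient_map_eq_iff _ _).2 ⟨-δ, ?_, ?_⟩
  · simp
  · simp [hδ]

lemma exists_projB_comp_eq_of_hom_sgl {M : RMod Λ} (φ : Kq.obj (twoTerm f) ⟶ Kq.obj (sgl M)) :
    ∃ ψ, Kq.map (projB f) ≫ ψ = φ := by
  obtain ⟨Φ, rfl⟩ := Kq.map_surjective φ
  exact exists_projB_comp_eq_of_deg1_eq Φ 0 (isZero_punit.eq_of_tgt _ _)

lemma exists_projB_comp_eq_of_not_isIso (hmin : RightMinimal f)
    (hlift : ∀ g : B ⟶ P, ∃ h, h ≫ f = g)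
    (hfact : ∀ β : P ⟶ P, ¬ IsIso β → ∃ δ : P ⟶ B, δ ≫ f = β)
    (φ : Kq.obj (twoTerm f) ⟶ Kq.obj (twoTerm f)) (hφ : ¬ IsIso φ) :
    ∃ ψ, Kq.map (projB f) ≫ ψ = φ := by
  obtain ⟨Φ, rfl⟩ := Kq.map_surjective φ
  have hΦ₁ : ¬ IsIso (deg1 Φ) := fun _ => by
    have := hmin.isIso_of_comp_eq_comp hlift (deg0_comp_eq_comp_deg1 Φ)
    have := isIso_of_isIso_deg Φ
    exact hφ inferInstance
  obtain ⟨δ, hδ⟩ := hfact _ hΦ₁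
  exact exists_projB_comp_eq_of_deg1_eq Φ δ hδ

end Projection

theorem hom_from_Pstar_radical_description_general
    (Λ : Type) [Ring Λ] (P Q B : RMod Λ)
    (f : B ⟶ P) (happrox : IsRightApprox Q f) (hmin : RightMinimal f)
    (hfact : ∀ β : P ⟶ P, ¬ IsIso β → ∃ δ : P ⟶ B, δ ≫ f = β) :
    (∀ g : (Kq).obj (sgl B) ⟶ (Kq).obj (sgl (regR Λ) ⊞ twoTerm f),
      ((Kq).map (projB f) ≫ g = 0 ↔
        ∃ h : (Kq).obj (sgl P) ⟶ (Kq).obj (sgl (regR Λ) ⊞ twoTerm f),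
          (Kq).map (sglMap f) ≫ h = g)) ∧
    (∀ φ : (Kq).obj (twoTerm f) ⟶ (Kq).obj (sgl (regR Λ) ⊞ twoTerm f),
      ¬ IsIso (φ ≫ (Kq).map (biprod.snd : sgl (regR Λ) ⊞ twoTerm f ⟶ twoTerm f)) →
      ∃ ψ : (Kq).obj (sgl B) ⟶ (Kq).obj (sgl (regR Λ) ⊞ twoTerm f),
        φ = (Kq).map (projB f) ≫ ψ) := by
  refine ⟨fun g => ⟨fun hg => ?_, ?_⟩, fun φ hφ => ?_⟩
  · have hcomp {Y : CochainComplex (RMod Λ) ℤ} (p : sgl (regR Λ) ⊞ twoTerm f ⟶ Y) :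
        Kq.map (projB f) ≫ g ≫ Kq.map p = 0 := by
      rw [← Category.assoc, hg, zero_comp]
    exact Functor.exists_comp_eq_of_biprod Kq _ g
      (exists_sglMap_comp_eq_of_projB_comp_eq_zero _ (hcomp biprod.fst))
      (exists_sglMap_comp_eq_of_projB_comp_eq_zero _ (hcomp biprod.snd))
  · rintro ⟨h, rfl⟩
    rw [← Category.assoc, quotient_map_projB_comp_sglMap, zero_comp]
  · obtain ⟨ψ, hψ⟩ := Functor.exists_comp_eq_of_biprod Kq (Kq.map (projB f)) φ
      (exists_projB_comp_eq_of_hom_sgl _)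
      (exists_projB_comp_eq_of_not_isIso hmin (happrox.2 B happrox.1) hfact _ hφ)
    exact ⟨ψ, hψ.symm⟩

/-- Let `Λ = P ⊕ Q` as right `Λ`-modules, `f : B ⟶ P` a right minimal right
`add Q`-approximation of `P`; assume every non-automorphism endomorphism of `P` factors through
`f` and every endomorphism `u` of `P` with `u ∘ f = 0` is zero. Set `X := Λ[0] ⊕ P*` in
`K(Mod Λ)`. Then:
(i) the sequence `Hom(P[0], X) ⟶ Hom(B[0], X) ⟶ Hom(P*, X)`, given by precomposition with the
chain map `B[0] ⟶ P[0]` induced by `f` and with `π : P* ⟶ B[0]`, is exact at the middle term;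
(ii) every `φ : P* ⟶ X` whose component `P* ⟶ P*` is not an isomorphism factors through `π`. -/
theorem hom_from_Pstar_radical_description
    (Λ : Type) [Ring Λ] (P Q B : RMod Λ)
    (decomp : regR Λ ≅ P ⊞ Q)
    (f : B ⟶ P) (happrox : IsRightApprox Q f) (hmin : RightMinimal f)
    (hfact : ∀ β : P ⟶ P, ¬ IsIso β → ∃ δ : P ⟶ B, δ ≫ f = β)
    (hvanish : ∀ u : P ⟶ P, f ≫ u = 0 → u = 0) :
    (∀ g : (Kq).obj (sgl B) ⟶ (Kq).obj (sgl (regR Λ) ⊞ twoTerm f),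
      ((Kq).map (projB f) ≫ g = 0 ↔
        ∃ h : (Kq).obj (sgl P) ⟶ (Kq).obj (sgl (regR Λ) ⊞ twoTerm f),
          (Kq).map (sglMap f) ≫ h = g)) ∧
    (∀ φ : (Kq).obj (twoTerm f) ⟶ (Kq).obj (sgl (regR Λ) ⊞ twoTerm f),
      ¬ IsIso (φ ≫ (Kq).map (biprod.snd : sgl (regR Λ) ⊞ twoTerm f ⟶ twoTerm f)) →
      ∃ ψ : (Kq).obj (sgl B) ⟶ (Kq).obj (sgl (regR Λ) ⊞ twoTerm f),
        φ = (Kq).map (projB f) ≫ ψ) :=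
  hom_from_Pstar_radical_description_general Λ P Q B f happrox hmin hfact
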